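/- For every pyramidal tour with step-backs x, define the pyramidal tour x̂ (without step-backs) by: city i is visited by x̂ in descending order iff i is part of a step-back in x, and in ascending order otherwise. Then the vertices v(x) and v(x̂) are adjacent in the 1-skeleton of PSB(n). -/

import Mathlib

/-!
Write `t` for the top city. Characteristic vectors of tours are `0/1` vectors, so a convex
combination of tours landing on the segment `[v(x), v(y)]` only uses tours `ρ` whose edges are
edges of `x` or `y`. If every such tour with `ρ t = y t` is `y`, the coordinate `(t, y t)` reads
off the weight of `y` and the remaining weight is forced onto `x`: the segment is a face.

That combinatorial claim is proved by fixing `ρ` to `y` from the top city down. At the largest city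
`c` with `ρ c = x c ≠ y c`, a local case analysis gives a contradiction: the cities descending in
the pyramidal tour `y` are exactly those in a step-back of `x`, and every peak or valley of a tour
with step-backs other than its two ends belongs to a step-back. Taking `ρ = x` shows `x t ≠ y t`
unless `x = y`. The facts about peaks and valleys of `y` and of tours with step-backs come from
counting crossings of a cut `{i | i ≤ k}`: the cities leaving it upwards are as many as its valleys
minus its peaks.
-/

/-- A Hamiltonian tour on the cities `{1,…,n}` (represented as `Fin n`,
city `c` corresponding to the element `c-1`): a permutation acting cyclically on all cities. -/
def IsTour {n : ℕ} (τ : Equiv.Perm (Fin n)) : Prop :=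
  ∀ i j : Fin n, ∃ k : ℕ, (τ ^ k) i = j

/-- `i` is a peak of the tour `τ`. -/
def IsPeak {n : ℕ} (τ : Equiv.Perm (Fin n)) (i : Fin n) : Prop :=
  τ⁻¹ i < i ∧ τ i < i

/-- `i` is a step-back peak of `τ`: either `τ⁻¹ i < i`, `τ i = i - 1`, `τ² i > i`
(ascending step-back) or `τ⁻² i > i`, `τ⁻¹ i = i - 1`, `τ i < i` (descending step-back). -/
def IsStepBackPeak {n : ℕ} (τ : Equiv.Perm (Fin n)) (i : Fin n) : Prop :=
  (τ⁻¹ i < i ∧ ((τ i : ℕ) + 1 = (i : ℕ)) ∧ i < τ (τ i)) ∨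
  (i < τ⁻¹ (τ⁻¹ i) ∧ ((τ⁻¹ i : ℕ) + 1 = (i : ℕ)) ∧ τ i < i)

/-- A pyramidal tour: a Hamiltonian tour whose unique peak is the last city `n`. -/
def IsPyramidal {n : ℕ} (τ : Equiv.Perm (Fin n)) : Prop :=
  IsTour τ ∧ ∀ i : Fin n, IsPeak τ i ↔ (i : ℕ) = n - 1

/-- A pyramidal tour with step-backs: a Hamiltonian tour with exactly one proper peak
(a peak that is not a step-back peak), namely the last city `n`. -/
def IsPSB {n : ℕ} (τ : Equiv.Perm (Fin n)) : Prop :=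
  IsTour τ ∧ ∀ i : Fin n, (IsPeak τ i ∧ ¬ IsStepBackPeak τ i) ↔ (i : ℕ) = n - 1

/-- City `i` is visited by `τ` in ascending order (taking step-backs into account):
either the successor of `i` is larger and `i` is not the lower city of a descending
step-back, or `i` is an ascending step-back peak. -/
def Ascends {n : ℕ} (τ : Equiv.Perm (Fin n)) (i : Fin n) : Prop :=
  (i < τ i ∧ ¬ (((i : ℕ) + 1 = (τ i : ℕ)) ∧ τ (τ i) < τ i ∧ τ i < τ⁻¹ i)) ∨
  (τ⁻¹ i < i ∧ ((τ i : ℕ) + 1 = (i : ℕ)) ∧ i < τ (τ i))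

/-- The city represented by the element of `Fin n` with value `m` is visited ascending. -/
def AscAt {n : ℕ} (τ : Equiv.Perm (Fin n)) (m : ℕ) : Prop :=
  ∃ i : Fin n, (i : ℕ) = m ∧ Ascends τ i

/-- The city represented by the element of `Fin n` with value `m` is a step-back peak. -/
def SBPeakAt {n : ℕ} (τ : Equiv.Perm (Fin n)) (m : ℕ) : Prop :=
  ∃ i : Fin n, (i : ℕ) = m ∧ IsStepBackPeak τ i

/-- The pyramidal encodings of `x` and `y` have the same value at coordinate `m`. -/
def SameEnc {n : ℕ} (x y : Equiv.Perm (Fin n)) (m : ℕ) : Prop :=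
  (AscAt x m ↔ AscAt y m) ∧ (SBPeakAt x m ↔ SBPeakAt y m)

/-- The pyramidal encodings of `x` and `y` agree on the pair of neighboring
coordinates `(k, k+1)`, including the step-back marks overlapping the pair. -/
def SamePair {n : ℕ} (x y : Equiv.Perm (Fin n)) (k : ℕ) : Prop :=
  SameEnc x y k ∧ SameEnc x y (k + 1) ∧ (SBPeakAt x (k + 2) ↔ SBPeakAt y (k + 2))

/-- Characteristic vector of a tour, in `ℝ^E` with `E = Fin n × Fin n`. -/
def chv {n : ℕ} (τ : Equiv.Perm (Fin n)) : Fin n × Fin n → ℝ :=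
  fun e => if τ e.1 = e.2 then 1 else 0

/-- The vertices of the polytope `PSB(n)`: characteristic vectors of all
pyramidal tours with step-backs. -/
def PSBvertices (n : ℕ) : Set (Fin n × Fin n → ℝ) :=
  chv '' {τ : Equiv.Perm (Fin n) | IsPSB τ}

/-- `u` and `w` are adjacent vertices in the 1-skeleton of the polytope `conv S`:
the segment `[u,w]` is a one-dimensional face (an extreme subset) of the polytope. -/
def AdjacentIn {n : ℕ} (S : Set (Fin n × Fin n → ℝ)) (u w : Fin n × Fin n → ℝ) : Prop :=
  u ≠ w ∧ IsExtreme ℝ (convexHull ℝ S) (segment ℝ u w)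

/-- City `i` is part of a step-back of `x`: it is a step-back peak, or the next city is. -/
def PartOfStepBack {n : ℕ} (x : Equiv.Perm (Fin n)) (i : Fin n) : Prop :=
  IsStepBackPeak x i ∨ SBPeakAt x ((i : ℕ) + 1)

open Finset Equiv

namespace Equiv.Perm

variable {α : Type*}

theorem apply_inv_self (σ : Perm α) (a : α) : σ (σ⁻¹ a) = a := σ.apply_symm_apply a

theorem inv_apply_self (σ : Perm α) (a : α) : σ⁻¹ (σ a) = a := σ.symm_apply_apply a

end Equiv.Perm

def IsValley {n : ℕ} (σ : Perm (Fin n)) (i : Fin n) : Prop :=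
  i < σ⁻¹ i ∧ i < σ i

section Crossings

open scoped Classical

variable {n : ℕ} (σ : Perm (Fin n))

theorem card_inv_apply_lt_add_card_isValley (s : Finset (Fin n)) :
    #{i ∈ s | σ⁻¹ i < i} + #{i ∈ s | IsValley σ i} =
      #{i ∈ s | i < σ i} + #{i ∈ s | IsPeak σ i} := by
  simp only [card_filter, ← sum_add_distrib]
  refine sum_congr rfl fun i _ => ?_
  have hfix : (σ⁻¹ i : ℕ) = i ↔ (σ i : ℕ) = i := by
    simpa [Fin.ext_iff] using (Perm.inv_eq_iff_eq (f := σ) (x := i) (y := i)).trans eq_comm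
  unfold IsValley IsPeak
  split_ifs <;> omega

theorem card_apply_notMem_add_card_isPeak (s : Finset (Fin n))
    (hs : IsLowerSet (s : Set (Fin n))) :
    #{i ∈ s | σ i ∉ s} + #{i ∈ s | IsPeak σ i} = #{i ∈ s | IsValley σ i} := by
  have hinv : #{i ∈ s | σ⁻¹ i < i} = #{i ∈ s | σ i ∈ s ∧ i < σ i} := by
    refine card_nbij' (σ⁻¹ ·) (σ ·) (fun i hi => ?_) (fun i hi => ?_) (fun i _ => by simp)
      (fun i _ => by simp)
    · simp only [coe_filter, Set.mem_ofPred_eq] at hi ⊢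
      exact ⟨hs (le_of_lt hi.2) hi.1, by simpa using hi.1, by simpa using hi.2⟩
    · simp only [coe_filter, Set.mem_ofPred_eq] at hi ⊢
      exact ⟨hi.2.1, by simpa using hi.2.2⟩
  have hup : #{i ∈ s | i < σ i} = #{i ∈ s | σ i ∈ s ∧ i < σ i} + #{i ∈ s | σ i ∉ s} := by
    rw [← card_filter_add_card_filter_not (p := fun i => σ i ∈ s), filter_filter, filter_filter]
    congr 2
    · ext i; simp [and_comm]
    · ext i
      simp only [mem_filter, and_congr_right_iff]
      intro hi
      refine ⟨fun h => h.2, fun h => ⟨?_, h⟩⟩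
      by_contra hle
      exact h (hs (not_lt.1 hle) hi)
  have := card_inv_apply_lt_add_card_isValley σ s
  omega

theorem card_apply_notMem_eq (s : Finset (Fin n)) :
    #{i ∈ s | σ i ∉ s} = #{i ∈ sᶜ | σ i ∈ s} := by
  have h₁ := card_filter_add_card_filter_not (s := s) (fun i => σ i ∈ s)
  have h₂ : #{i | σ i ∈ s} = #s := by
    rw [← card_map σ.toEmbedding]
    congr 1
    ext j
    simp
  have h₃ : #{i | σ i ∈ s} = #{i ∈ s | σ i ∈ s} + #{i ∈ sᶜ | σ i ∈ s} := by
    rw [← card_filter_add_card_filter_not (s := {i | σ i ∈ s}) (· ∈ s), filter_filter,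
      filter_filter]
    congr 2 <;> ext i <;> simp [and_comm]
  omega

end Crossings

section Tours

variable {n : ℕ} {σ : Perm (Fin n)}

theorem IsTour.apply_ne_of_apply_ne (hσ : IsTour σ) {i : Fin n} (hi : σ i ≠ i) (j : Fin n) :
    σ j ≠ j := by
  intro hj
  obtain ⟨k, hk⟩ := hσ j i
  rw [Perm.pow_apply_eq_self_of_apply_eq_self hj] at hk
  exact hi (hk ▸ hj)

theorem IsStepBackPeak.isPeak {p : Fin n} (hp : IsStepBackPeak σ p) : IsPeak σ p := by
  rcases hp with ⟨h₁, h₂, -⟩ | ⟨-, h₂, h₃⟩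
  · exact ⟨h₁, by omega⟩
  · exact ⟨by omega, h₃⟩

theorem IsStepBackPeak.two_le {p : Fin n} (hp : IsStepBackPeak σ p) : 2 ≤ (p : ℕ) := by
  by_contra hlt
  rcases hp with ⟨h₁, h₂, h₃⟩ | ⟨h₁, h₂, h₃⟩
  · have : σ p = σ⁻¹ p := by ext; omega
    rw [this, σ.apply_inv_self] at h₃
    exact h₃.false
  · have : σ⁻¹ p = σ p := by ext; omega
    rw [this, σ.inv_apply_self] at h₁
    exact h₁.false

theorem IsStepBackPeak.lt_last {p : Fin n} (hp : IsStepBackPeak σ p) : (p : ℕ) < n - 1 := by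
  rcases hp with ⟨-, -, h⟩ | ⟨h, -, -⟩ <;> omega

theorem IsStepBackPeak.isValley_of_succ_eq {p w : Fin n} (hp : IsStepBackPeak σ p)
    (hw : (w : ℕ) + 1 = p) : IsValley σ w := by
  rcases hp with ⟨-, h₂, h₃⟩ | ⟨h₁, h₂, -⟩
  · obtain rfl : σ p = w := by ext; omega
    exact ⟨by rw [σ.inv_apply_self]; omega, by omega⟩
  · obtain rfl : σ⁻¹ p = w := by ext; omega
    exact ⟨by omega, by rw [σ.apply_inv_self]; omega⟩

end Tours

section PSB

variable {n : ℕ} {σ : Perm (Fin n)}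

theorem IsPSB.apply_ne (hσ : IsPSB σ) (i : Fin n) : σ i ≠ i :=
  hσ.1.apply_ne_of_apply_ne ((hσ.2 ⟨n - 1, by have := i.isLt; omega⟩).2 rfl).1.2.ne i

theorem IsPSB.inv_apply_ne (hσ : IsPSB σ) (i : Fin n) : σ⁻¹ i ≠ i := fun h =>
  hσ.apply_ne i (Perm.inv_eq_iff_eq.1 h).symm

theorem IsPSB.isStepBackPeak_of_isPeak (hσ : IsPSB σ) {i : Fin n} (hi : IsPeak σ i)
    (hin : (i : ℕ) ≠ n - 1) : IsStepBackPeak σ i := by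
  by_contra h
  exact hin ((hσ.2 i).1 ⟨hi, h⟩)

theorem IsPSB.isValley_of_val_eq_zero (hσ : IsPSB σ) {i : Fin n} (hi : (i : ℕ) = 0) :
    IsValley σ i := by
  have h₁ := hσ.inv_apply_ne i
  have h₂ := hσ.apply_ne i
  rw [Ne, Fin.ext_iff] at h₁ h₂
  constructor <;> omega

open scoped Classical in
/-- Peaks and valleys are equinumerous, and the peak `n` together with the step-back peaks
`p` account for the valleys `1` and `p - 1`, so there are no other valleys. -/
theorem IsPSB.val_eq_zero_or_sbPeakAt_of_isValley (hσ : IsPSB σ) {v : Fin n}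
    (hv : IsValley σ v) : (v : ℕ) = 0 ∨ SBPeakAt σ (v + 1) := by
  have hcard : #{i | IsPeak σ i} = #{i | IsValley σ i} := by
    simpa using card_apply_notMem_add_card_isPeak σ univ (by simp [isLowerSet_univ])
  let f (p : Fin n) (_ : p ∈ ({i | IsPeak σ i} : Finset (Fin n))) : Fin n :=
    if (p : ℕ) = n - 1 then ⟨0, p.pos⟩ else ⟨p - 1, by omega⟩
  have hf : ∀ (p : Fin n) hp, (p : ℕ) = n - 1 ∧ (f p hp : ℕ) = 0 ∨
      IsStepBackPeak σ p ∧ 1 ≤ (f p hp : ℕ) ∧ (f p hp : ℕ) + 1 = p := by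
    intro p hp
    by_cases hpn : (p : ℕ) = n - 1
    · exact Or.inl ⟨hpn, by simp [f, hpn]⟩
    · have hsb := hσ.isStepBackPeak_of_isPeak (mem_filter.1 hp).2 hpn
      have := hsb.two_le
      simp only [f, if_neg hpn]
      exact Or.inr ⟨hsb, by omega, by omega⟩
  obtain ⟨p, hp, rfl⟩ := surj_on_of_inj_on_of_card_le f
    (fun p hp => by
      rcases hf p hp with ⟨-, h⟩ | ⟨hsb, -, h⟩
      · simpa using hσ.isValley_of_val_eq_zero h
      · simpa using hsb.isValley_of_succ_eq h)
    (fun p q hp hq hpq => by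
      have := congrArg Fin.val hpq
      rcases hf p hp with h | h <;> rcases hf q hq with h' | h' <;> ext <;> omega)
    hcard.ge v (by simpa using hv)
  rcases hf p hp with ⟨-, h⟩ | ⟨hsb, -, h⟩
  · exact Or.inl h
  · exact Or.inr ⟨p, h.symm, hsb⟩

end PSB

section Pyramidal

open scoped Classical

variable {n : ℕ} {σ : Perm (Fin n)}

theorem IsPyramidal.isPSB (hσ : IsPyramidal σ) : IsPSB σ :=
  ⟨hσ.1, fun i => ⟨fun h => (hσ.2 i).1 h.1,
    fun h => ⟨(hσ.2 i).2 h, fun hsb => by have := hsb.lt_last; omega⟩⟩⟩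

theorem IsPyramidal.val_eq_zero_of_isValley (hσ : IsPyramidal σ) {v : Fin n}
    (hv : IsValley σ v) : (v : ℕ) = 0 := by
  refine (hσ.isPSB.val_eq_zero_or_sbPeakAt_of_isValley hv).resolve_right ?_
  rintro ⟨p, -, hp⟩
  have := (hσ.2 p).1 hp.isPeak
  have := hp.lt_last
  omega

theorem IsPyramidal.card_apply_notMem_le_one (hσ : IsPyramidal σ) (s : Finset (Fin n))
    (hs : IsLowerSet (s : Set (Fin n))) : #{i ∈ s | σ i ∉ s} ≤ 1 := by
  have hv : #{i ∈ s | IsValley σ i} ≤ 1 := card_le_one.2 fun a ha b hb => by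
    have := hσ.val_eq_zero_of_isValley (mem_filter.1 ha).2
    have := hσ.val_eq_zero_of_isValley (mem_filter.1 hb).2
    ext; omega
  have := card_apply_notMem_add_card_isPeak σ s hs
  omega

theorem IsPyramidal.apply_lt_of_lt_of_lt_apply (hσ : IsPyramidal σ) {i c : Fin n}
    (h₁ : i < c) (h₂ : c < σ i) : σ c < c := by
  refine (hσ.isPSB.apply_ne c).lt_or_gt.resolve_right fun hc => ?_
  have hle := hσ.card_apply_notMem_le_one (Iic c) (by simpa using isLowerSet_Iic c)
  have hlt : 1 < #{j ∈ Iic c | σ j ∉ Iic c} :=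
    one_lt_card.2 ⟨i, by simp only [mem_filter, mem_Iic, not_le]; exact ⟨h₁.le, h₂⟩, c,
      by simpa using hc, h₁.ne⟩
  omega

theorem IsPyramidal.lt_apply_of_apply_lt_of_lt (hσ : IsPyramidal σ) {i c : Fin n}
    (h₁ : σ i < c) (h₂ : c < i) : c < σ c := by
  refine (hσ.isPSB.apply_ne c).lt_or_gt.resolve_left fun hc => ?_
  have hle := hσ.card_apply_notMem_le_one (Iio c) (by simpa using isLowerSet_Iio c)
  rw [card_apply_notMem_eq] at hle
  have hlt : 1 < #{j ∈ (Iio c)ᶜ | σ j ∈ Iio c} :=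
    one_lt_card.2 ⟨i, by simp only [mem_filter, mem_compl, mem_Iio, not_lt]; exact ⟨h₂.le, h₁⟩,
      c, by simpa using hc, h₂.ne'⟩
  omega

theorem IsPyramidal.apply_eq_of_apply_lt_of_apply_lt (hσ : IsPyramidal σ) {c w : Fin n}
    (hc : σ c < c) (hw : σ w < w) (hwc : (w : ℕ) + 1 = c) : σ c = w := by
  by_contra hne
  have : σ c < w := by rw [Fin.ext_iff] at hne; omega
  exact (hσ.lt_apply_of_apply_lt_of_lt this (by omega)).not_gt hw

theorem IsPyramidal.lt_inv_apply_of_apply_lt (hσ : IsPyramidal σ) {c : Fin n} (hc : σ c < c)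
    (hcn : (c : ℕ) ≠ n - 1) : c < σ⁻¹ c :=
  (hσ.isPSB.inv_apply_ne c).lt_or_gt.resolve_left fun h => hcn ((hσ.2 c).1 ⟨h, hc⟩)

theorem IsPyramidal.inv_apply_lt_of_lt_apply (hσ : IsPyramidal σ) {c : Fin n} (hc : c < σ c)
    (hc0 : (c : ℕ) ≠ 0) : σ⁻¹ c < c :=
  (hσ.isPSB.inv_apply_ne c).lt_or_gt.resolve_right fun h =>
    hc0 (hσ.val_eq_zero_of_isValley ⟨h, hc⟩)

end Pyramidal

/-- `y` is the tour `x̂` of the paper, read on the inner cities. -/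
def IsHatOf {n : ℕ} (y x : Perm (Fin n)) : Prop :=
  ∀ i : Fin n, 1 ≤ (i : ℕ) → (i : ℕ) ≤ n - 2 → (i < y i ↔ ¬ PartOfStepBack x i)

section Hat

variable {n : ℕ} {x y ρ : Perm (Fin n)}

theorem IsHatOf.apply_lt_of_isStepBackPeak (hyx : IsHatOf y x) (hy : IsPyramidal y)
    {p : Fin n} (hp : IsStepBackPeak x p) : y p < p := by
  refine (hy.isPSB.apply_ne p).lt_or_gt.resolve_right fun h => ?_
  have := hp.two_le
  have := hp.lt_last
  exact (hyx p (by omega) (by omega)).1 h (Or.inl hp)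

theorem IsHatOf.apply_lt_of_succ_isStepBackPeak (hyx : IsHatOf y x) (hy : IsPyramidal y)
    {p w : Fin n} (hp : IsStepBackPeak x p) (hw : (w : ℕ) + 1 = p) : y w < w := by
  refine (hy.isPSB.apply_ne w).lt_or_gt.resolve_right fun h => ?_
  have := hp.two_le
  have := hp.lt_last
  exact (hyx w (by omega) (by omega)).1 h (Or.inr ⟨p, hw.symm, hp⟩)

theorem IsHatOf.partOfStepBack_of_apply_lt (hyx : IsHatOf y x) {c : Fin n} (hc : y c < c)
    (hcn : (c : ℕ) ≠ n - 1) : PartOfStepBack x c := by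
  by_contra h
  exact ((hyx c (by omega) (by omega)).2 h).not_gt hc

variable (hy : IsPyramidal y) (hρ : IsPSB ρ) (hρxy : ∀ i, ρ i = x i ∨ ρ i = y i)
include hy hρ hρxy

/-- `c` is a peak of `ρ`, hence a step-back peak of `ρ`, and the edges of that step-back are
edges of `x`. -/
theorem isStepBackPeak_of_apply_lt_of_lt_apply (hx : IsPSB x) {c : Fin n}
    (hgt : ∀ d, c < d → ρ d = y d) (hc : c < y c) (hρc : ρ c = x c) (hlt : ρ c < c) :
    IsStepBackPeak x c := by
  have hcn : (c : ℕ) < n - 1 := by omega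
  have hinv : ρ⁻¹ c < c := by
    refine (hρ.inv_apply_ne c).lt_or_gt.resolve_right fun h => ?_
    have hyc : y⁻¹ c = ρ⁻¹ c :=
      Perm.inv_eq_iff_eq.2 ((hgt _ h).symm.trans (Perm.apply_inv_self ρ c)).symm
    exact (hy.inv_apply_lt_of_lt_apply hc (by omega)).not_gt (hyc ▸ h)
  have hsb := hρ.isStepBackPeak_of_isPeak ⟨hinv, hlt⟩ (by omega)
  have := hsb.two_le
  rcases hsb with ⟨-, h₂, h₃⟩ | ⟨h₁, h₂, h₃⟩
  · have hρw : ρ (ρ c) = x (ρ c) := (hρxy _).resolve_right fun h =>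
      (hy.apply_lt_of_lt_of_lt_apply (i := ρ c) hlt (h ▸ h₃)).not_gt hc
    have hv : IsValley x (ρ c) :=
      ⟨by rw [hρc, Perm.inv_apply_self]; omega, by rw [← hρw]; omega⟩
    obtain ⟨p, hp, hsbp⟩ := (hx.val_eq_zero_or_sbPeakAt_of_isValley hv).resolve_left (by omega)
    obtain rfl : p = c := by ext; omega
    exact hsbp
  · have hyw : y (ρ⁻¹ (ρ⁻¹ c)) = ρ⁻¹ c := (hgt _ h₁).symm.trans (Perm.apply_inv_self ρ _)
    have hdesc : y (ρ⁻¹ c) < ρ⁻¹ c := (hy.isPSB.apply_ne _).lt_or_gt.resolve_right fun h => by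
      have := hy.inv_apply_lt_of_lt_apply h (by omega)
      rw [Perm.inv_eq_iff_eq.2 hyw.symm] at this
      omega
    have hxw : x (ρ⁻¹ c) = c := by
      have := hρxy (ρ⁻¹ c)
      rw [Perm.apply_inv_self] at this
      exact (this.resolve_right fun h => by omega).symm
    exact hx.isStepBackPeak_of_isPeak
      ⟨by rw [← hxw, Perm.inv_apply_self]; omega, hρc ▸ h₃⟩ (by omega)

variable (hyx : IsHatOf y x)
include hyx

theorem apply_eq_of_apply_lt_of_forall_gt {c : Fin n} (hgt : ∀ d, c < d → ρ d = y d)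
    (hc : y c < c) (hcn : (c : ℕ) ≠ n - 1) : ρ c = y c := by
  by_contra hne
  have hρc : ρ c = x c := (hρxy c).resolve_right hne
  rcases hyx.partOfStepBack_of_apply_lt hc hcn with hsb | ⟨p, hpc, hsb⟩
  · rcases id hsb with ⟨-, h₂, -⟩ | ⟨h₁, h₂, -⟩
    · have hw := hyx.apply_lt_of_succ_isStepBackPeak hy hsb h₂
      exact hne (hρc.trans (hy.apply_eq_of_apply_lt_of_apply_lt hc hw h₂).symm)
    · have hyc := hy.apply_eq_of_apply_lt_of_apply_lt hc
        (hyx.apply_lt_of_succ_isStepBackPeak hy hsb h₂) h₂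
      -- `ρ` enters `c - 1` from `c` or from `x⁻¹ (c - 1) > c`; both clash with `y c = c - 1`.
      have hr := hρxy (ρ⁻¹ (x⁻¹ c))
      rw [Perm.apply_inv_self] at hr
      rcases hr with hr | hr
      · have hρr : ρ (x⁻¹ (x⁻¹ c)) = x⁻¹ c := by
          rw [← Perm.eq_inv_iff_eq.2 hr.symm, Perm.apply_inv_self]
        exact h₁.ne' (y.injective ((hgt _ h₁).symm.trans (hρr.trans hyc.symm)))
      · have hr' : ρ⁻¹ (x⁻¹ c) = c := y.injective (hr.symm.trans hyc.symm)
        rw [Perm.inv_eq_iff_eq, hρc] at hr'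
        rw [hr', Perm.inv_apply_self] at h₁
        exact h₁.false
  · -- `c` becomes a valley of `ρ`, so `p = c + 1` is a step-back peak of `ρ`, yet `ρ` enters
    -- `p` from above.
    have hcp : c < p := by omega
    have hyp := hyx.apply_lt_of_isStepBackPeak hy hsb
    have hρp : ρ p = c :=
      (hgt p hcp).trans (hy.apply_eq_of_apply_lt_of_apply_lt hyp hc hpc.symm)
    have hv : IsValley ρ c :=
      ⟨Perm.inv_eq_iff_eq.2 hρp.symm ▸ hcp,
        by rw [hρc]; exact (hsb.isValley_of_succ_eq hpc.symm).2⟩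
    obtain ⟨q, hq, hsbq⟩ := (hρ.val_eq_zero_or_sbPeakAt_of_isValley hv).resolve_left (by omega)
    obtain rfl : q = p := by ext; omega
    have hs := hy.lt_inv_apply_of_apply_lt hyp (by have := hsb.lt_last; omega)
    have hρs : ρ (y⁻¹ q) = q := (hgt _ (hcp.trans hs)).trans (Perm.apply_inv_self y q)
    exact (Perm.inv_eq_iff_eq.2 hρs.symm ▸ hsbq.isPeak.1).not_gt hs

theorem apply_eq_of_lt_apply_of_forall_gt (hx : IsPSB x) {c : Fin n}
    (hgt : ∀ d, c < d → ρ d = y d) (hc : c < y c) : ρ c = y c := by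
  by_contra hne
  have hρc : ρ c = x c := (hρxy c).resolve_right hne
  rcases (hρ.apply_ne c).lt_or_gt with hlt | hlt
  · have hsb := isStepBackPeak_of_apply_lt_of_lt_apply hy hρ hρxy hx hgt hc hρc hlt
    exact (hyx.apply_lt_of_isStepBackPeak hy hsb).not_gt hc
  · rcases lt_trichotomy (y⁻¹ (ρ c)) c with h | h | h
    · exact (hy.apply_lt_of_lt_of_lt_apply h (by rwa [Perm.apply_inv_self])).not_gt hc
    · exact hne ((Perm.apply_inv_self y _).symm.trans (congrArg y h))
    · have := hgt _ h
      rw [Perm.apply_inv_self] at this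
      exact h.ne' (ρ.injective this)

theorem eq_of_forall_apply_eq_or_apply_eq (hx : IsPSB x) {t : Fin n} (ht : (t : ℕ) = n - 1)
    (hρt : ρ t = y t) : ρ = y := by
  refine Equiv.ext fun c => ?_
  induction c using WellFoundedGT.induction with
  | _ c hgt =>
    rcases (hy.isPSB.apply_ne c).lt_or_gt with hc | hc
    · by_cases hcn : (c : ℕ) = n - 1
      · obtain rfl : c = t := Fin.ext (hcn.trans ht.symm)
        exact hρt
      · exact apply_eq_of_apply_lt_of_forall_gt hy hρ hρxy hyx hgt hc hcn
    · exact apply_eq_of_lt_apply_of_forall_gt hy hρ hρxy hyx hx hgt hc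

end Hat

section Polytope

theorem isExtreme_segment_convexHull {E : Type*} [AddCommGroup E] [Module ℝ E]
    {S : Finset E} {u w : E} (hu : u ∈ S) (hw : w ∈ S)
    (h : ∀ μ : E → ℝ, (∀ v ∈ S, 0 ≤ μ v) → ∑ v ∈ S, μ v = 1 →
      ∑ v ∈ S, μ v • v ∈ segment ℝ u w → ∀ v ∈ S, μ v ≠ 0 → v = u ∨ v = w) :
    IsExtreme ℝ (convexHull ℝ (S : Set E)) (segment ℝ u w) := by
  classical
  refine ⟨(convex_convexHull ℝ _).segment_subset (subset_convexHull ℝ _ hu)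
    (subset_convexHull ℝ _ hw), ?_⟩
  rintro a ha b hb z hz ⟨s, t, hs, ht, hst, rfl⟩
  obtain ⟨α, hα0, hα1, rfl⟩ := Finset.mem_convexHull'.1 ha
  obtain ⟨β, hβ0, hβ1, rfl⟩ := Finset.mem_convexHull'.1 hb
  have hsupp := h (fun v => s * α v + t * β v)
    (fun v hv => add_nonneg (mul_nonneg hs.le (hα0 v hv)) (mul_nonneg ht.le (hβ0 v hv)))
    (by simp [sum_add_distrib, ← mul_sum, hα1, hβ1, hst])
    (by simpa [add_smul, mul_smul, sum_add_distrib, ← smul_sum] using hz)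
  rw [← sum_filter_of_ne (p := fun v => α v ≠ 0) fun v _ hv hαv => hv (by simp [hαv])]
  refine (convex_segment u w).sum_mem (fun v hv => hα0 v (mem_filter.1 hv).1)
    (by rw [sum_filter_ne_zero, hα1]) fun v hv => ?_
  obtain ⟨hvS, hαv⟩ := mem_filter.1 hv
  have hμv : s * α v + t * β v ≠ 0 :=
    (add_pos_of_pos_of_nonneg (mul_pos hs ((hα0 v hvS).lt_of_ne' hαv))
      (mul_nonneg ht.le (hβ0 v hvS))).ne'
  rcases hsupp v hvS hμv with rfl | rfl
  · exact left_mem_segment ℝ _ _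
  · exact right_mem_segment ℝ _ _

variable {n : ℕ}

theorem chv_injective : Function.Injective (chv : Perm (Fin n) → Fin n × Fin n → ℝ) :=
  fun τ τ' h => Equiv.ext fun i => by simpa [chv, eq_comm] using congrFun h (i, τ i)

open scoped Classical in
theorem sum_smul_chv_apply (P : Finset (Perm (Fin n))) (ν : Perm (Fin n) → ℝ) (i j : Fin n) :
    (∑ ρ ∈ P, ν ρ • chv ρ) (i, j) = ∑ ρ ∈ P with ρ i = j, ν ρ := by
  simp [Finset.sum_apply, chv, sum_filter]

open scoped Classical in
theorem eq_of_sum_smul_chv_eq_smul_chv {Q : Finset (Perm (Fin n))} {ν : Perm (Fin n) → ℝ}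
    (hν : ∀ ρ ∈ Q, 0 ≤ ν ρ) {x : Perm (Fin n)}
    (h : ∑ ρ ∈ Q, ν ρ • chv ρ = (∑ ρ ∈ Q, ν ρ) • chv x) : ∀ ρ ∈ Q, ν ρ ≠ 0 → ρ = x := by
  intro ρ hρ hνρ
  refine Equiv.ext fun i => ?_
  by_contra hne
  have hi := congrFun h (i, x i)
  simp only [sum_smul_chv_apply, Pi.smul_apply, chv, if_pos, smul_eq_mul, mul_one] at hi
  have h0 : ∑ σ ∈ Q with ¬ σ i = x i, ν σ = 0 := by
    linarith [sum_filter_add_sum_filter_not Q (fun σ => σ i = x i) ν]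
  exact hνρ ((sum_eq_zero_iff_of_nonneg fun σ hσ => hν σ (mem_filter.1 hσ).1).1 h0 ρ
    (mem_filter.2 ⟨hρ, hne⟩))

open scoped Classical in
/-- Coordinates outside `x ∪ y` force the support into tours inside `x ∪ y`; the coordinate
`(e, y e)` then measures the weight of `y`, and the remaining weight must sit on `x`. -/
theorem eq_or_eq_of_sum_smul_chv_mem_segment {P : Finset (Perm (Fin n))} {x y : Perm (Fin n)}
    (hy : y ∈ P) {e : Fin n} (he : x e ≠ y e)
    (hP : ∀ ρ ∈ P, (∀ i, ρ i = x i ∨ ρ i = y i) → ρ e = y e → ρ = y)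
    {ν : Perm (Fin n) → ℝ} (hν0 : ∀ ρ ∈ P, 0 ≤ ν ρ) (hν1 : ∑ ρ ∈ P, ν ρ = 1)
    (hz : ∑ ρ ∈ P, ν ρ • chv ρ ∈ segment ℝ (chv x) (chv y)) :
    ∀ ρ ∈ P, ν ρ ≠ 0 → ρ = x ∨ ρ = y := by
  obtain ⟨a, b, -, -, hab, hz⟩ := hz
  have hcoord (i j : Fin n) :
      ∑ ρ ∈ P with ρ i = j, ν ρ = (if x i = j then a else 0) + (if y i = j then b else 0) := by
    rw [← sum_smul_chv_apply, ← hz]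
    simp [chv]
  have hsub : ∀ ρ ∈ P, ν ρ ≠ 0 → ∀ i, ρ i = x i ∨ ρ i = y i := by
    intro ρ hρ hνρ i
    by_contra! hne
    have hi := hcoord i (ρ i)
    rw [if_neg hne.1.symm, if_neg hne.2.symm, add_zero] at hi
    have hle := single_le_sum (f := ν) (fun σ hσ => hν0 σ (mem_filter.1 hσ).1)
      (show ρ ∈ P.filter (· i = ρ i) from mem_filter.2 ⟨hρ, rfl⟩)
    exact hνρ (le_antisymm (hi ▸ hle) (hν0 ρ hρ))
  have hνy : ν y = b := by
    have he' := hcoord e (y e)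
    rw [if_neg he, if_pos rfl, zero_add, sum_eq_single_of_mem y
      (show y ∈ P.filter (· e = y e) from mem_filter.2 ⟨hy, rfl⟩)] at he'
    · exact he'
    intro ρ hρ hρy
    by_contra hνρ
    exact hρy (hP ρ (mem_filter.1 hρ).1 (hsub ρ (mem_filter.1 hρ).1 hνρ) (mem_filter.1 hρ).2)
  have hrest : ∑ ρ ∈ P.erase y, ν ρ • chv ρ = (∑ ρ ∈ P.erase y, ν ρ) • chv x := by
    have hmass : ∑ ρ ∈ P.erase y, ν ρ = a := by
      linarith [add_sum_erase P ν hy]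
    rw [hmass, ← add_right_inj (ν y • chv y), add_sum_erase P (fun ρ => ν ρ • chv ρ) hy, ← hz,
      hνy, add_comm]
  intro ρ hρ hνρ
  by_cases hρy : ρ = y
  · exact Or.inr hρy
  · exact Or.inl (eq_of_sum_smul_chv_eq_smul_chv (fun σ hσ => hν0 σ (mem_of_mem_erase hσ))
      hrest ρ (mem_erase.2 ⟨hρy, hρ⟩) hνρ)

theorem isExtreme_segment_chv (P : Finset (Perm (Fin n))) {x y : Perm (Fin n)} (hx : x ∈ P)
    (hy : y ∈ P) {e : Fin n} (he : x e ≠ y e)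
    (hP : ∀ ρ ∈ P, (∀ i, ρ i = x i ∨ ρ i = y i) → ρ e = y e → ρ = y) :
    IsExtreme ℝ (convexHull ℝ ↑(P.image chv)) (segment ℝ (chv x) (chv y)) := by
  classical
  refine isExtreme_segment_convexHull (mem_image_of_mem chv hx) (mem_image_of_mem chv hy)
    fun μ hμ0 hμ1 hz => ?_
  rw [sum_image chv_injective.injOn] at hμ1 hz
  simp only [forall_mem_image, chv_injective.eq_iff] at hμ0 ⊢
  exact eq_or_eq_of_sum_smul_chv_mem_segment hy he hP hμ0 hμ1 hz

end Polytope

theorem stmt6_general (n : ℕ) (x y : Equiv.Perm (Fin n))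
    (hx : IsPSB x) (hy : IsPyramidal y)
    (h : ∀ i : Fin n, 1 ≤ (i : ℕ) → (i : ℕ) ≤ n - 2 →
      (i < y i ↔ ¬ PartOfStepBack x i)) :
    x = y ∨ AdjacentIn (PSBvertices n) (chv x) (chv y) := by
  classical
  refine or_iff_not_imp_left.2 fun hxy => ?_
  obtain ⟨i, -⟩ := not_forall.1 fun h' => hxy (Equiv.ext h')
  have hlast : (⟨n - 1, by have := i.isLt; omega⟩ : Fin n).val = n - 1 := rfl
  have hxt := mt (eq_of_forall_apply_eq_or_apply_eq hy hx (fun _ => Or.inl rfl) h hx hlast) hxy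
  have hvert : PSBvertices n = ((univ.filter IsPSB).image chv : Finset (Fin n × Fin n → ℝ)) := by
    ext
    simp [PSBvertices]
  refine ⟨chv_injective.ne hxy, hvert ▸ isExtreme_segment_chv _ (by simpa using hx)
    (by simpa using hy.isPSB) hxt fun ρ hρ hρxy hρt => ?_⟩
  exact eq_of_forall_apply_eq_or_apply_eq hy (mem_filter.1 hρ).2 hρxy h hx hlast hρt

/-- For a pyramidal tour with step-backs `x`, the pyramidal tour `y = x̂` visiting a city
descending iff it is part of a step-back of `x` gives a vertex adjacent to `v(x)` in the
1-skeleton of `PSB(n)` (unless the tours coincide). -/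
theorem stmt6 (n : ℕ) (hn : 4 ≤ n) (x y : Equiv.Perm (Fin n))
    (hx : IsPSB x) (hy : IsPyramidal y)
    (h : ∀ i : Fin n, 1 ≤ (i : ℕ) → (i : ℕ) ≤ n - 2 →
      (i < y i ↔ ¬ PartOfStepBack x i)) :
    x = y ∨ AdjacentIn (PSBvertices n) (chv x) (chv y) :=
  stmt6_general n x y hx hy h
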